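/- arXiv:2601.08774 — 2 statements merged into one kernel-verified Lean document; each statement's English description precedes it below -/
import Mathlib

section
/- Let q be a nonnegative integer. The polytope P' in ℝ^{2q+3} with coordinates (a0, a1, a2, a_{1,1}, a_{1,2}, …, a_{q,1}, a_{q,2}) defined by the conditions 0 ≤ a1 ≤ a0 ≤ a2 ≤ 1, Σ_{n=1}^q a_{n,1} ≤ a1, Σ_{n=1}^q a_{n,2} ≤ a2, and a_{n,1} ≥ 0, a_{n,2} ≥ 0 for all n, has (2q+3)-dimensional Lebesgue measure equal to 1/((2q+3)·q!·(q+1)·(q+2)·q!). -/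
open MeasureTheory Set
open scoped Nat

/-!
Slicing by `a0`, then `a1`, then `a2`, the fibre over `(a0, a1, a2)` is the product of the
corner simplices `{y ≥ 0, ∑ y ≤ a1}` and `{z ≥ 0, ∑ z ≤ a2}`, of volumes `a1^q/q!` and `a2^q/q!`
(by induction on `q`, slicing off one coordinate at a time). Cavalieri's principle over
`0 ≤ a1 ≤ a0 ≤ a2 ≤ 1` then reduces the volume to
`∫₀¹ x^(q+1) (1 - x^(q+1)) dx / ((q+1)!)² = (q+1) / ((q+2)(2q+3)((q+1)!)²)`.
-/

theorem MeasureTheory.Measure.prod_setOf_fst_mem_and {α β : Type*} [MeasurableSpace α]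
    [MeasurableSpace β] (μ : Measure α) (ν : Measure β) [SFinite ν] {s : Set α}
    (hs : MeasurableSet s) {t : α → Set β}
    (hst : MeasurableSet {p : α × β | p.1 ∈ s ∧ p.2 ∈ t p.1}) :
    μ.prod ν {p | p.1 ∈ s ∧ p.2 ∈ t p.1} = ∫⁻ x in s, ν (t x) ∂μ := by
  rw [Measure.prod_apply hst, ← lintegral_indicator hs]
  refine lintegral_congr fun x => ?_
  by_cases hx : x ∈ s <;> simp [hx]

theorem volume_setOf_fst_mem_Icc_and {β : Type*} [MeasureSpace β] [SFinite (volume : Measure β)]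
    {a b : ℝ} (hab : a ≤ b) {t : ℝ → Set β}
    (ht : MeasurableSet {p : ℝ × β | p.1 ∈ Icc a b ∧ p.2 ∈ t p.1}) {f : ℝ → ℝ}
    (hf : IntegrableOn f (Icc a b)) (hf0 : ∀ x ∈ Icc a b, 0 ≤ f x)
    (hft : ∀ x ∈ Icc a b, volume (t x) = ENNReal.ofReal (f x)) :
    volume {p : ℝ × β | p.1 ∈ Icc a b ∧ p.2 ∈ t p.1} = ENNReal.ofReal (∫ x in a..b, f x) := by
  rw [Measure.volume_eq_prod, Measure.prod_setOf_fst_mem_and _ _ measurableSet_Icc ht,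
    setLIntegral_congr_fun measurableSet_Icc hft, intervalIntegral.integral_of_le hab,
    ← integral_Icc_eq_integral_Ioc, ofReal_integral_eq_lintegral_ofReal hf
      ((ae_restrict_iff' measurableSet_Icc).2 (ae_of_all _ hf0))]

theorem integral_pow_div_factorial (n : ℕ) (a b : ℝ) :
    ∫ x in a..b, x ^ n / n ! = (b ^ (n + 1) - a ^ (n + 1)) / (n + 1)! := by
  rw [intervalIntegral.integral_div, integral_pow, Nat.factorial_succ, Nat.cast_mul, div_div]
  push_cast
  ring

def cornerSimplex (n : ℕ) (t : ℝ) : Set (Fin n → ℝ) := {y | (∀ i, 0 ≤ y i) ∧ ∑ i, y i ≤ t}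

@[fun_prop]
theorem Measurable.mem_cornerSimplex {X : Type*} [MeasurableSpace X] {n : ℕ} {f : X → ℝ}
    {g : X → Fin n → ℝ} (hf : Measurable f) (hg : Measurable g) :
    Measurable fun x => g x ∈ cornerSimplex n (f x) := by
  simp only [cornerSimplex, mem_ofPred_eq]
  fun_prop

theorem volume_cornerSimplex (n : ℕ) {t : ℝ} (ht : 0 ≤ t) :
    volume (cornerSimplex n t) = ENNReal.ofReal (t ^ n / n !) := by
  induction n generalizing t with
  | zero => simp [cornerSimplex, ht, volume_pi]
  | succ n ih =>
    have hsplit : cornerSimplex (n + 1) t = MeasurableEquiv.piFinSuccAbove (fun _ => ℝ) 0 ⁻¹'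
        {p : ℝ × (Fin n → ℝ) | p.1 ∈ Icc 0 t ∧ p.2 ∈ cornerSimplex n (t - p.1)} := by
      ext y
      simp only [cornerSimplex, Fin.forall_fin_succ, Fin.sum_univ_succ, mem_ofPred_eq,
        mem_preimage, MeasurableEquiv.piFinSuccAbove_apply, Fin.insertNthEquiv_symm_apply,
        Fin.removeNth_zero, Fin.tail, mem_Icc]
      have htail := Finset.sum_nonneg (s := .univ) (f := fun i : Fin n => y i.succ)
      constructor
      · rintro ⟨⟨h0, hpos⟩, hsum⟩
        exact ⟨⟨h0, by linarith [htail fun i _ => hpos i]⟩, hpos, by linarith⟩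
      · rintro ⟨⟨h0, -⟩, hpos, hsum⟩
        exact ⟨⟨h0, hpos⟩, by linarith⟩
    rw [hsplit, (volume_preserving_piFinSuccAbove _ 0).measure_preimage_equiv,
      volume_setOf_fst_mem_Icc_and ht (measurableSet_setOfPred.2 (by simp only [mem_Icc]; fun_prop))
        (Continuous.integrableOn_Icc (by fun_prop)) (fun s hs => by have := hs.2; positivity)
        (fun s hs => ih (sub_nonneg.2 hs.2)),
      intervalIntegral.integral_comp_sub_left (fun x => x ^ n / n !), integral_pow_div_factorial]
    simp

theorem volume_setOf_Icc_cornerSimplex_prod (n : ℕ) {a b c : ℝ} (ha : 0 ≤ a) (hab : a ≤ b)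
    (hc : 0 ≤ c) :
    volume {r : ℝ × (Fin n → ℝ) × (Fin n → ℝ) |
        r.1 ∈ Icc a b ∧ r.2 ∈ cornerSimplex n c ×ˢ cornerSimplex n r.1} =
      ENNReal.ofReal (c ^ n / n ! * ((b ^ (n + 1) - a ^ (n + 1)) / (n + 1)!)) := by
  rw [volume_setOf_fst_mem_Icc_and (t := fun x => cornerSimplex n c ×ˢ cornerSimplex n x) hab
      (measurableSet_setOfPred.2 (by simp only [mem_prod, mem_Icc]; fun_prop))
      (Continuous.integrableOn_Icc (f := fun x => c ^ n / n ! * (x ^ n / n !)) (by fun_prop))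
      (fun x hx => by have := ha.trans hx.1; positivity),
    intervalIntegral.integral_const_mul, integral_pow_div_factorial]
  intro x hx
  rw [Measure.volume_eq_prod, Measure.prod_prod, volume_cornerSimplex n hc,
    volume_cornerSimplex n (ha.trans hx.1), ← ENNReal.ofReal_mul (by positivity)]

theorem volume_setOf_Icc_Icc_cornerSimplex_prod (n : ℕ) {a b : ℝ} (ha : 0 ≤ a) (hab : a ≤ b) :
    volume {p : ℝ × ℝ × (Fin n → ℝ) × (Fin n → ℝ) | p.1 ∈ Icc 0 a ∧
        p.2 ∈ {r | r.1 ∈ Icc a b ∧ r.2 ∈ cornerSimplex n p.1 ×ˢ cornerSimplex n r.1}} =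
      ENNReal.ofReal (a ^ (n + 1) / (n + 1)! * ((b ^ (n + 1) - a ^ (n + 1)) / (n + 1)!)) := by
  have hba : 0 ≤ b ^ (n + 1) - a ^ (n + 1) := sub_nonneg.2 (pow_le_pow_left₀ ha hab _)
  rw [volume_setOf_fst_mem_Icc_and ha
      (measurableSet_setOfPred.2 (by simp only [mem_prod, mem_ofPred_eq, mem_Icc]; fun_prop))
      (Continuous.integrableOn_Icc
        (f := fun x => x ^ n / n ! * ((b ^ (n + 1) - a ^ (n + 1)) / (n + 1)!)) (by fun_prop))
      (fun x hx => by have := hx.1; positivity)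
      (fun x hx => volume_setOf_Icc_cornerSimplex_prod n ha hab hx.1),
    intervalIntegral.integral_mul_const, integral_pow_div_factorial]
  simp

theorem integral_pow_mul_one_sub_pow (m : ℕ) :
    ∫ x in (0 : ℝ)..1, x ^ m * (1 - x ^ m) = m / ((m + 1) * (2 * m + 1)) := by
  have hsq : ∀ x : ℝ, x ^ m * (1 - x ^ m) = x ^ m - x ^ (2 * m) := fun x => by ring
  simp only [hsq]
  rw [intervalIntegral.integral_sub ((continuous_pow _).intervalIntegrable _ _)
    ((continuous_pow _).intervalIntegrable _ _), integral_pow, integral_pow]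
  field_simp
  push_cast
  ring

theorem stmt5 (q : ℕ) :
    volume {x : ℝ × ℝ × ℝ × (Fin q → ℝ) × (Fin q → ℝ) |
        0 ≤ x.2.1 ∧ x.2.1 ≤ x.1 ∧ x.1 ≤ x.2.2.1 ∧ x.2.2.1 ≤ 1 ∧
        (∑ n, x.2.2.2.1 n) ≤ x.2.1 ∧ (∑ n, x.2.2.2.2 n) ≤ x.2.2.1 ∧
        (∀ n, 0 ≤ x.2.2.2.1 n) ∧ (∀ n, 0 ≤ x.2.2.2.2 n)} =
      ENNReal.ofReal (1 / ((2 * (q : ℝ) + 3) * (q.factorial : ℝ) * ((q : ℝ) + 1) *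
        ((q : ℝ) + 2) * (q.factorial : ℝ))) := by
  have hS : {x : ℝ × ℝ × ℝ × (Fin q → ℝ) × (Fin q → ℝ) |
        0 ≤ x.2.1 ∧ x.2.1 ≤ x.1 ∧ x.1 ≤ x.2.2.1 ∧ x.2.2.1 ≤ 1 ∧
        (∑ n, x.2.2.2.1 n) ≤ x.2.1 ∧ (∑ n, x.2.2.2.2 n) ≤ x.2.2.1 ∧
        (∀ n, 0 ≤ x.2.2.2.1 n) ∧ (∀ n, 0 ≤ x.2.2.2.2 n)} =
      {x | x.1 ∈ Icc 0 1 ∧ x.2 ∈ {p | p.1 ∈ Icc 0 x.1 ∧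
        p.2 ∈ {r | r.1 ∈ Icc x.1 1 ∧ r.2 ∈ cornerSimplex q p.1 ×ˢ cornerSimplex q r.1}}} := by
    ext ⟨a0, a1, a2, y, z⟩
    simp only [cornerSimplex, mem_ofPred_eq, mem_Icc, mem_prod]
    constructor
    · rintro ⟨h1, h10, h02, h2, hy, hz, hy0, hz0⟩
      exact ⟨⟨h1.trans h10, h02.trans h2⟩, ⟨h1, h10⟩, ⟨h02, h2⟩, ⟨hy0, hy⟩, hz0, hz⟩
    · rintro ⟨-, ⟨h1, h10⟩, ⟨h02, h2⟩, ⟨hy0, hy⟩, hz0, hz⟩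
      exact ⟨h1, h10, h02, h2, hy, hz, hy0, hz0⟩
  rw [hS, volume_setOf_fst_mem_Icc_and zero_le_one
      (measurableSet_setOfPred.2 (by simp only [mem_prod, mem_ofPred_eq, mem_Icc]; fun_prop))
      (Continuous.integrableOn_Icc (by fun_prop))
      (fun x hx => mul_nonneg (by have := hx.1; positivity)
        (div_nonneg (sub_nonneg.2 (pow_le_pow_left₀ hx.1 hx.2 _)) (by positivity)))
      (fun a ha => volume_setOf_Icc_Icc_cornerSimplex_prod q ha.1 ha.2)]
  congr 1
  calc _ = (∫ x in (0 : ℝ)..1, x ^ (q + 1) * (1 - x ^ (q + 1))) / ((q + 1)! : ℝ) ^ 2 := by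
        rw [← intervalIntegral.integral_div]
        congr with x
        ring
    _ = _ := by
        rw [integral_pow_mul_one_sub_pow, Nat.factorial_succ]
        push_cast
        field_simp
        ring
end

section
/- Let K be a number field of degree d with r1 real and r2 complex places, and set q = r1 + r2 − 1. Fix ε > 0. Then the number of units u in a fixed finitely generated subgroup U ≤ O_K^× of rank q satisfying |u|_v ≤ X_v at every archimedean place v, where ∏_v X_v = X ≥ 2, is ((μ-constant)/Reg)·(log X)^q/q! + O((log X)^{q−1}), uniformly in the X_v; in particular it is O((log X)^q). -/
/-!
The logarithmic embedding sends every unit `u` with `w(u)^{mult w} ≤ X_w` into the sup-norm ball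
of radius `(log X)/2` centred at `(log X_w - (log X)/2)_w`: the upper bounds are the hypotheses,
and the lower bounds `log X_w - log X ≤ mult w · log w(u)` follow from the product formula
`∑_w mult w · log w(u) = 0`. A ball of radius `R` meets a discrete lattice in `O((R + 1)^q)`
points, and each point of the unit lattice has only as many preimages as there are roots of unity.
-/

open NumberField NumberField.InfinitePlace NumberField.Units
open NumberField.Units.dirichletUnitTheorem Metric Module

theorem AddMonoidHom.card_le_card_ker_mul_card_of_mapsTo {G H : Type*} [AddGroup G] [AddGroup H]
    (f : G →+ H) [Finite f.ker] {S : Set G} {T : Set H} [Finite T] (hST : Set.MapsTo f S T) :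
    Nat.card S ≤ Nat.card f.ker * Nat.card T := by
  classical
  have hsec : ∀ x ∈ S, f (Function.invFunOn f S (f x)) = f x :=
    fun x hx => Function.invFunOn_eq ⟨x, hx, rfl⟩
  let φ : S → f.ker × T := fun x =>
    (⟨x - Function.invFunOn f S (f x), by simp [map_sub, hsec x x.2]⟩, ⟨f x, hST x.2⟩)
  rw [← Nat.card_prod]
  refine Nat.card_le_card_of_injective φ fun x y hxy => ?_
  simp only [φ, Prod.mk.injEq, Subtype.mk.injEq] at hxy
  rw [hxy.2, sub_left_inj] at hxy
  exact Subtype.ext hxy.1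

theorem sub_sum_le_of_sum_eq_zero {ι α : Type*} [Fintype ι] [AddCommGroup α] [PartialOrder α]
    [IsOrderedAddMonoid α] {a b : ι → α} (ha : ∑ i, a i = 0) (hab : ∀ i, a i ≤ b i) (i : ι) :
    b i - ∑ j, b j ≤ a i := by
  have h := Finset.single_le_sum (f := fun j => b j - a j) (fun j _ => sub_nonneg.2 (hab j))
    (Finset.mem_univ i)
  rw [Finset.sum_sub_distrib, ha, sub_zero] at h
  exact sub_le_comm.1 h

theorem ZLattice.exists_card_inter_closedBall_le {E : Type*} [NormedAddCommGroup E]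
    [NormedSpace ℝ E] [FiniteDimensional ℝ E] (L : Submodule ℤ E) [DiscreteTopology L] :
    ∃ C : ℝ, 0 ≤ C ∧ ∀ (c : E) (R : ℝ), 0 ≤ R →
      Finite ↥((L : Set E) ∩ closedBall c R) ∧
        Nat.card ↥((L : Set E) ∩ closedBall c R) ≤ (C * R + 1) ^ finrank ℤ L := by
  let b := Free.chooseBasis ℤ L
  have hε := ZLattice.normBound_pos b
  refine ⟨4 / ZLattice.normBound b, by positivity, fun c R hR => ?_⟩
  rcases ((L : Set E) ∩ closedBall c R).eq_empty_or_nonempty with hB | ⟨x₀, hx₀L, hx₀⟩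
  · rw [hB]
    exact ⟨Set.finite_empty.to_subtype, by simp; positivity⟩
  -- The centre `c` need not lie in `L`, so points are located by their coordinates relative to `x₀`.
  let N := ⌊2 * R / ZLattice.normBound b⌋
  have hN : 0 ≤ N := Int.floor_nonneg.2 (by positivity)
  have hrepr : ∀ x : ↥((L : Set E) ∩ closedBall c R), ∀ i,
      b.repr ⟨x - x₀, sub_mem x.2.1 hx₀L⟩ i ∈ Finset.Icc (-N) N := by
    intro x i
    have hdist : ‖(x : E) - x₀‖ ≤ 2 * R := by
      rw [← dist_eq_norm]
      linarith [dist_triangle_right (x : E) x₀ c, mem_closedBall.1 x.2.2, mem_closedBall.1 hx₀]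
    have h := (ZLattice.abs_repr_le b ⟨x - x₀, sub_mem x.2.1 hx₀L⟩ i).trans
      (mul_le_mul_of_nonneg_left hdist (inv_nonneg.2 hε.le))
    rw [Finset.mem_Icc, ← abs_le, Int.le_floor, div_eq_inv_mul]
    exact h
  let φ : ↥((L : Set E) ∩ closedBall c R) → (Free.ChooseBasisIndex ℤ L → Finset.Icc (-N) N) :=
    fun x i => ⟨_, hrepr x i⟩
  have hφ : Function.Injective φ := by
    intro x y hxy
    have : b.repr ⟨x - x₀, sub_mem x.2.1 hx₀L⟩ = b.repr ⟨y - x₀, sub_mem y.2.1 hx₀L⟩ :=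
      Finsupp.ext fun i => congrArg Subtype.val (congrFun hxy i)
    exact Subtype.ext (by simpa using this)
  refine ⟨Finite.of_injective φ hφ, (Nat.cast_le.2 (Nat.card_le_card_of_injective φ hφ)).trans ?_⟩
  rw [Nat.card_pi, Finset.prod_const, Finset.card_univ, ← finrank_eq_card_chooseBasisIndex,
    Nat.card_eq_fintype_card, Fintype.card_coe, Int.card_Icc, Nat.cast_pow]
  have hcard : (((N + 1 - -N).toNat : ℕ) : ℝ) = 2 * N + 1 := by
    rw [← Int.cast_natCast, Int.toNat_of_nonneg (by omega)]
    push_cast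
    ring
  have hfloor : (N : ℝ) ≤ 2 * R / ZLattice.normBound b := Int.floor_le _
  rw [hcard]
  refine pow_le_pow_left₀ (by positivity) ?_ _
  rw [show 4 / ZLattice.normBound b * R = 2 * (2 * R / ZLattice.normBound b) by ring]
  linarith

namespace NumberField.Units

variable {K : Type*} [Field K] [NumberField K]

open scoped Classical in
theorem logEmbedding_mem_closedBall {X : ℝ} {Xv : InfinitePlace K → ℝ} (hX : 1 ≤ X)
    (hXv : ∏ w, Xv w = X) {u : (𝓞 K)ˣ} (hu : ∀ w : InfinitePlace K, w u ^ w.mult ≤ Xv w) :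
    logEmbedding K (Additive.ofMul u) ∈
      closedBall (fun w => Real.log (Xv w.1) - Real.log X / 2) (Real.log X / 2) := by
  have hupos : ∀ w : InfinitePlace K, 0 < w u ^ w.mult := fun w => pow_pos (pos_at_place u w) _
  have hle : ∀ w : InfinitePlace K, w.mult * Real.log (w u) ≤ Real.log (Xv w) := fun w => by
    rw [← Real.log_pow]
    exact Real.log_le_log (hupos w) (hu w)
  have hsum : ∑ w, Real.log (Xv w) = Real.log X := by
    rw [← hXv, Real.log_prod]
    exact fun w _ => ((hupos w).trans_le (hu w)).ne'
  have hge := sub_sum_le_of_sum_eq_zero (sum_mult_mul_log u) hle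
  rw [hsum] at hge
  rw [mem_closedBall, dist_pi_le_iff (by have := Real.log_nonneg hX; positivity)]
  intro w
  rw [Real.dist_eq, abs_le, logEmbedding_component]
  constructor <;> linarith [hle w.1, hge w.1]

instance : Finite (logEmbedding K).ker := by
  rw [logEmbedding_ker]
  exact inferInstanceAs (Finite (torsion K))

theorem exists_card_le_of_pow_mult_le :
    ∃ C : ℝ, 0 ≤ C ∧ ∀ (X : ℝ) (Xv : InfinitePlace K → ℝ), 1 ≤ X → ∏ w, Xv w = X →
      Nat.card {u : (𝓞 K)ˣ // ∀ w : InfinitePlace K, w u ^ w.mult ≤ Xv w} ≤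
        Nat.card (logEmbedding K).ker * (C * (Real.log X / 2) + 1) ^ rank K := by
  classical
  obtain ⟨C, hC, hcount⟩ := ZLattice.exists_card_inter_closedBall_le (unitLattice K)
  refine ⟨C, hC, fun X Xv hX hXv => ?_⟩
  obtain ⟨_, hcard⟩ := hcount (fun w => Real.log (Xv w.1) - Real.log X / 2) (Real.log X / 2)
    (by have := Real.log_nonneg hX; positivity)
  rw [unitLattice_rank] at hcard
  have hmaps : Set.MapsTo (logEmbedding K)
      {u | ∀ w : InfinitePlace K, w ((Additive.toMul u : (𝓞 K)ˣ) : K) ^ w.mult ≤ Xv w}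
      ((unitLattice K : Set (logSpace K)) ∩
        closedBall (fun w => Real.log (Xv w.1) - Real.log X / 2) (Real.log X / 2)) :=
    fun u hu => ⟨⟨u, trivial, rfl⟩, logEmbedding_mem_closedBall hX hXv hu⟩
  refine (Nat.cast_le.2 (AddMonoidHom.card_le_card_ker_mul_card_of_mapsTo _ hmaps)).trans ?_
  push_cast
  gcongr

end NumberField.Units

theorem stmt17 (K : Type*) [Field K] [NumberField K] :
    ∃ c : ℝ, ∀ X : ℝ, 2 ≤ X → ∀ Xv : InfinitePlace K → ℝ,
      (∏ w : InfinitePlace K, Xv w) = X →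
      (Nat.card {u : (𝓞 K)ˣ //
          ∀ w : InfinitePlace K, (w (algebraMap (𝓞 K) K u)) ^ w.mult ≤ Xv w} : ℝ) ≤
        c * (Real.log X) ^ (NumberField.Units.rank K) := by
  obtain ⟨C, hC, hcard⟩ := exists_card_le_of_pow_mult_le (K := K)
  refine ⟨Nat.card (logEmbedding K).ker * (C / 2 + 2) ^ rank K, fun X hX Xv hXv => ?_⟩
  have hlogX : 1 ≤ 2 * Real.log X := by
    linarith [Real.log_two_gt_d9, Real.log_le_log two_pos hX]
  calc (Nat.card {u : (𝓞 K)ˣ // _} : ℝ)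
      ≤ Nat.card (logEmbedding K).ker * (C * (Real.log X / 2) + 1) ^ rank K :=
        hcard X Xv (by linarith) hXv
    _ ≤ Nat.card (logEmbedding K).ker * ((C / 2 + 2) * Real.log X) ^ rank K := by
        refine mul_le_mul_of_nonneg_left (pow_le_pow_left₀ ?_ (by linarith) _) (Nat.cast_nonneg _)
        exact add_nonneg (mul_nonneg hC (by linarith)) zero_le_one
    _ = _ := by rw [mul_pow]; ring
end
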